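/- The weak composition of RCC5 relations is associative, (R ⋄ S) ⋄ T = R ⋄ (S ⋄ T) for all RCC5 relations R, S, T, and the cycle law holds: (R ⋄ S) ∩ T ≠ ∅ iff (R⁻¹ ⋄ T) ∩ S ≠ ∅ iff (T ⋄ S⁻¹) ∩ R ≠ ∅. -/

import Mathlib

/-- A *region* is a nonempty regular closed subset of the Euclidean plane `ℝ × ℝ`. -/
def Region : Type :=
  {x : Set (ℝ × ℝ) // x.Nonempty ∧ x = closure (interior x)}

namespace Region

/-- Part-of: `x P y` iff `x ⊆ y`. -/
def P (x y : Region) : Prop := x.1 ⊆ y.1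

/-- Overlap: `x O y` iff some region is a common part of `x` and `y`. -/
def O (x y : Region) : Prop := ∃ z : Region, z.1 ⊆ x.1 ∧ z.1 ⊆ y.1

/-- Connection: `x C y` iff `x ∩ y ≠ ∅`. -/
def C (x y : Region) : Prop := (x.1 ∩ y.1).Nonempty

end Region

/-- The five basic RCC5 relations. -/
inductive RCC5Basic : Type
  | DR | PO | PP | PPi | EQ
deriving DecidableEq

namespace RCC5Basic

/-- Interpretation of the basic RCC5 relations on regions. -/
def interp : RCC5Basic → Region → Region → Prop
  | DR, x, y => ¬ Region.O x y
  | PO, x, y => Region.O x y ∧ ¬ x.1 ⊆ y.1 ∧ ¬ y.1 ⊆ x.1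
  | PP, x, y => x.1 ⊆ y.1 ∧ x ≠ y
  | PPi, x, y => y.1 ⊆ x.1 ∧ x ≠ y
  | EQ, x, y => x = y

/-- Converse of a basic RCC5 relation. -/
def conv : RCC5Basic → RCC5Basic
  | DR => DR | PO => PO | PP => PPi | PPi => PP | EQ => EQ

end RCC5Basic

/-- An RCC5 relation is a union of basic relations, identified with a subset of `B₅`. -/
abbrev RCC5Rel : Type := Set RCC5Basic

namespace RCC5Rel

/-- A pair of regions is an instance of an RCC5 relation iff it is an instance of one of
its basic relations. -/
def interp (R : RCC5Rel) (x y : Region) : Prop := ∃ b ∈ R, RCC5Basic.interp b x y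

/-- Converse of an RCC5 relation. -/
def conv (R : RCC5Rel) : RCC5Rel := {b | RCC5Basic.conv b ∈ R}

/-- Weak composition: `γ ∈ R ⋄ S` iff `γ` intersects the relational composition `R ∘ S`. -/
def comp (R S : RCC5Rel) : RCC5Rel :=
  {γ | ∃ x z : Region, RCC5Basic.interp γ x z ∧
        ∃ y : Region, RCC5Rel.interp R x y ∧ RCC5Rel.interp S y z}

lemma conv_univ : RCC5Rel.conv Set.univ = Set.univ := by
  ext b; simp [RCC5Rel.conv]

end RCC5Rel

/-- A distributive subalgebra of RCC5: contains all basic relations, is closed under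
converse, weak composition and (nonempty) intersection, and weak composition distributes
over nonempty intersections. -/
def IsDistributiveSubalgebra (𝒮 : Set RCC5Rel) : Prop :=
  (∀ b : RCC5Basic, ({b} : RCC5Rel) ∈ 𝒮) ∧
  (∀ R ∈ 𝒮, RCC5Rel.conv R ∈ 𝒮) ∧
  (∀ R ∈ 𝒮, ∀ S ∈ 𝒮, RCC5Rel.comp R S ∈ 𝒮) ∧
  (∀ R ∈ 𝒮, ∀ S ∈ 𝒮, (R ∩ S).Nonempty → R ∩ S ∈ 𝒮) ∧
  (∀ R ∈ 𝒮, ∀ T₁ ∈ 𝒮, ∀ T₂ ∈ 𝒮, (T₁ ∩ T₂).Nonempty →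
    RCC5Rel.comp R (T₁ ∩ T₂) = RCC5Rel.comp R T₁ ∩ RCC5Rel.comp R T₂ ∧
    RCC5Rel.comp (T₁ ∩ T₂) R = RCC5Rel.comp T₁ R ∩ RCC5Rel.comp T₂ R)

namespace RCC5Proof

open RCC5Basic Metric

/-! ### Region helper lemmas -/

/-! ### The RCC5 composition table -/

def CT : RCC5Basic → RCC5Basic → List RCC5Basic
  | EQ, b => [b]
  | b, EQ => [b]
  | DR, DR => [DR,PO,PP,PPi,EQ]
  | DR, PO => [DR,PO,PP]
  | DR, PP => [DR,PO,PP]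
  | DR, PPi => [DR]
  | PO, DR => [DR,PO,PPi]
  | PO, PO => [DR,PO,PP,PPi,EQ]
  | PO, PP => [PO,PP]
  | PO, PPi => [DR,PO,PPi]
  | PP, DR => [DR]
  | PP, PO => [DR,PO,PP]
  | PP, PP => [PP]
  | PP, PPi => [DR,PO,PP,PPi,EQ]
  | PPi, DR => [DR,PO,PPi]
  | PPi, PO => [PO,PPi]
  | PPi, PP => [PO,PP,PPi,EQ]
  | PPi, PPi => [PPi]

def allB : List RCC5Basic := [DR,PO,PP,PPi,EQ]

lemma mem_allB (b : RCC5Basic) : b ∈ allB := by cases b <;> decide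

lemma O_symm {x y : Region} (h : Region.O x y) : Region.O y x :=
  let ⟨w, h1, h2⟩ := h; ⟨w, h2, h1⟩

lemma sound (b1 b2 γ : RCC5Basic) (x y z : Region)
    (h1 : RCC5Basic.interp b1 x y) (h2 : RCC5Basic.interp b2 y z)
    (h3 : RCC5Basic.interp γ x z) : γ ∈ CT b1 b2 := by
  have t1 : x.1 ⊆ y.1 → y.1 ⊆ z.1 → x.1 ⊆ z.1 := fun a b => a.trans b
  have t2 : y.1 ⊆ z.1 → z.1 ⊆ x.1 → y.1 ⊆ x.1 := fun a b => a.trans b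
  have t3 : z.1 ⊆ x.1 → x.1 ⊆ y.1 → z.1 ⊆ y.1 := fun a b => a.trans b
  have t4 : y.1 ⊆ x.1 → x.1 ⊆ z.1 → y.1 ⊆ z.1 := fun a b => a.trans b
  have t5 : x.1 ⊆ z.1 → z.1 ⊆ y.1 → x.1 ⊆ y.1 := fun a b => a.trans b
  have t6 : z.1 ⊆ y.1 → y.1 ⊆ x.1 → z.1 ⊆ x.1 := fun a b => a.trans b
  have s1 : x.1 ⊆ y.1 → Region.O x y := fun h => ⟨x, subset_rfl, h⟩
  have s2 : y.1 ⊆ x.1 → Region.O x y := fun h => ⟨y, h, subset_rfl⟩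
  have s3 : y.1 ⊆ z.1 → Region.O y z := fun h => ⟨y, subset_rfl, h⟩
  have s4 : z.1 ⊆ y.1 → Region.O y z := fun h => ⟨z, h, subset_rfl⟩
  have s5 : x.1 ⊆ z.1 → Region.O x z := fun h => ⟨x, subset_rfl, h⟩
  have s6 : z.1 ⊆ x.1 → Region.O x z := fun h => ⟨z, h, subset_rfl⟩
  have c1 : Region.O y z → z.1 ⊆ x.1 → Region.O x y :=
    fun h hz => let ⟨w, hw1, hw2⟩ := h; ⟨w, hw2.trans hz, hw1⟩
  have c2 : Region.O x z → z.1 ⊆ y.1 → Region.O x y :=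
    fun h hz => let ⟨w, hw1, hw2⟩ := h; ⟨w, hw1, hw2.trans hz⟩
  have c3 : Region.O x z → x.1 ⊆ y.1 → Region.O y z :=
    fun h hx => let ⟨w, hw1, hw2⟩ := h; ⟨w, hw1.trans hx, hw2⟩
  have c4 : Region.O x y → x.1 ⊆ z.1 → Region.O y z :=
    fun h hx => let ⟨w, hw1, hw2⟩ := h; ⟨w, hw2, hw1.trans hx⟩
  have c5 : Region.O x y → y.1 ⊆ z.1 → Region.O x z :=
    fun h hy => let ⟨w, hw1, hw2⟩ := h; ⟨w, hw1, hw2.trans hy⟩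
  have c6 : Region.O y z → y.1 ⊆ x.1 → Region.O x z :=
    fun h hy => let ⟨w, hw1, hw2⟩ := h; ⟨w, hw1.trans hy, hw2⟩
  have w1 : y.1 ⊆ x.1 → y.1 ⊆ z.1 → Region.O x z := fun a b => ⟨y, a, b⟩
  have w2 : x.1 ⊆ y.1 → x.1 ⊆ z.1 → Region.O y z := fun a b => ⟨x, a, b⟩
  have w3 : z.1 ⊆ x.1 → z.1 ⊆ y.1 → Region.O x y := fun a b => ⟨z, a, b⟩
  have e1 : x.1 ⊆ y.1 → y.1 ⊆ x.1 → x = y := fun a b => Subtype.ext (a.antisymm b)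
  have e3 : x.1 ⊆ z.1 → z.1 ⊆ x.1 → x = z := fun a b => Subtype.ext (a.antisymm b)
  rcases b1 <;> rcases b2 <;> rcases γ <;>
      simp only [RCC5Basic.interp] at h1 h2 h3 <;>
      (try subst h1) <;> (try subst h2) <;> (try subst h3) <;>
    first
    | decide
    | exfalso <;>
      first
    -- non-EQ rows, γ ≠ EQ contradictions
      | exact h1 ((c1 h2.1 h3.1))
      | exact h1 ((s2 (t2 h2.1 h3.1)))
      | exact h1 ((c2 h3.1 h2.1))
      | exact h1 ((s1 (t5 h3.1 h2.1)))
      | exact h1 ((w3 h3.1 h2.1))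
      | exact h2 ((c4 h1.1 h3.1))
      | exact h3 ((c5 h1.1 h2.1))
      | exact h1.2.2 ((t2 h2.1 h3.1))
      | exact h1.2.1 ((t5 h3.1 h2.1))
      | exact h2 ((c3 h3.1 h1.1))
      | exact h2 ((w2 h1.1 h3.1))
      | exact h2 ((s4 (t3 h3.1 h1.1)))
      | exact h2.2.2 ((t3 h3.1 h1.1))
      | exact h3 ((s5 (t1 h1.1 h2.1)))
      | exact h3.2.1 ((t1 h1.1 h2.1))
      | exact h1.2 ((e1 h1.1 (t2 h2.1 h3.1)))
      | exact h2 ((s3 (t4 h1.1 h3.1)))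
      | exact h3 ((c6 h2.1 h1.1))
      | exact h2.2.1 ((t4 h1.1 h3.1))
      | exact h3 ((w1 h1.1 h2.1))
      | exact h3 ((s6 (t6 h2.1 h1.1)))
      | exact h3.2.2 ((t6 h2.1 h1.1))
      | exact h3.2 ((e3 h3.1 (t6 h2.1 h1.1)))
    -- cases where some argument is EQ (after subst)
      | exact h1 ((O_symm h2.1))
      | exact h2 ((O_symm h1.1))
      | exact h1 (⟨_, h2.1, subset_rfl⟩)
      | exact h1 (⟨_, subset_rfl, h2.1⟩)
      | exact h2 (⟨_, h1.1, subset_rfl⟩)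
      | exact h2 (⟨_, subset_rfl, h1.1⟩)
      | exact h1.2.2 (h2.1)
      | exact h1.2.1 (h2.1)
      | exact h2.2.2 (h1.1)
      | exact h2.2.1 (h1.1)
      | exact h1.2 ((Subtype.ext (h1.1.antisymm h2.1)))
      | exact h1.2 ((Subtype.ext (h2.1.antisymm h1.1)))
      | exact h2 (h3.1)
      | exact h3 (h2.1)
      | exact h2 (⟨_, subset_rfl, h3.1⟩)
      | exact h3 (⟨_, subset_rfl, h2.1⟩)
      | exact h2 (⟨_, h3.1, subset_rfl⟩)
      | exact h3 (⟨_, h2.1, subset_rfl⟩)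
      | exact h2.2.1 (h3.1)
      | exact h3.2.1 (h2.1)
      | exact h2.2.2 (h3.1)
      | exact h3.2.2 (h2.1)
      | exact h2.2 ((Subtype.ext (h2.1.antisymm h3.1)))
      | exact h2.2 ((Subtype.ext (h3.1.antisymm h2.1)))
      | exact h1 (h3.1)
      | exact h3 (h1.1)
      | exact h1 (⟨_, subset_rfl, h3.1⟩)
      | exact h3 (⟨_, subset_rfl, h1.1⟩)
      | exact h1 (⟨_, h3.1, subset_rfl⟩)
      | exact h3 (⟨_, h1.1, subset_rfl⟩)
      | exact h1.2.1 (h3.1)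
      | exact h3.2.1 (h1.1)
      | exact h1.2.2 (h3.1)
      | exact h3.2.2 (h1.1)
      | exact h1.2 ((Subtype.ext (h1.1.antisymm h3.1)))
      | exact h1.2 ((Subtype.ext (h3.1.antisymm h1.1)))
      | exact h1 (⟨_, subset_rfl, subset_rfl⟩)
      | exact h2 (⟨_, subset_rfl, subset_rfl⟩)
      | exact h3 (⟨_, subset_rfl, subset_rfl⟩)
      | exact h1.2.1 (subset_rfl)
      | exact h2.2.1 (subset_rfl)
      | exact h3.2.1 (subset_rfl)
      | exact h1.2 (rfl)
      | exact h2.2 (rfl)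
      | exact h3.2 (rfl)

/-! ### A finite family of regions: disjoint unions of 4 closed balls -/

open Metric in
noncomputable def A (i : Fin 4) : Set (ℝ × ℝ) := closedBall ((4 * (i:ℕ) : ℝ), 0) 1

lemma A_nonempty (i : Fin 4) : (A i).Nonempty :=
  ⟨((4 * (i:ℕ) : ℝ), 0), Metric.mem_closedBall_self zero_le_one⟩

lemma A_regular (i : Fin 4) : A i = closure (interior (A i)) := by
  rw [A, interior_closedBall _ one_ne_zero, closure_ball _ one_ne_zero]

lemma A_closed (i : Fin 4) : IsClosed (A i) := Metric.isClosed_closedBall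

lemma A_disjoint {i j : Fin 4} (h : i ≠ j) {p : ℝ × ℝ} (hi : p ∈ A i) (hj : p ∈ A j) :
    False := by
  have h1 : dist p (((4 * (i:ℕ) : ℝ), 0) : ℝ × ℝ) ≤ 1 := hi
  have h2 : dist p (((4 * (j:ℕ) : ℝ), 0) : ℝ × ℝ) ≤ 1 := hj
  have hd : (4:ℝ) ≤ dist ((((4 * (i:ℕ) : ℝ), 0)) : ℝ × ℝ) (((4 * (j:ℕ) : ℝ), 0)) := by
    have hne : (i:ℤ) - (j:ℤ) ≠ 0 := by
      have : (i:ℤ) ≠ (j:ℤ) := by exact_mod_cast fun hh => h (Fin.ext (by exact_mod_cast hh))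
      omega
    have hij : (1:ℤ) ≤ |(i:ℤ) - (j:ℤ)| := Int.one_le_abs hne
    have key : (4:ℝ) ≤ |4 * ((i:ℕ):ℝ) - 4 * ((j:ℕ):ℝ)| := by
      have h4 : (4:ℤ) ≤ |4 * (i:ℤ) - 4 * (j:ℤ)| := by
        have e : 4 * (i:ℤ) - 4 * (j:ℤ) = 4 * ((i:ℤ) - (j:ℤ)) := by ring
        rw [e, abs_mul]
        simp only [abs_of_nonneg (by norm_num : (0:ℤ) ≤ 4)]
        linarith
      have : ((4:ℝ)) ≤ |((4 * ((i:ℤ)) - 4 * (j:ℤ) : ℤ) : ℝ)| := by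
        rw [← Int.cast_abs]; exact_mod_cast h4
      push_cast at this
      convert this using 3
    rw [Prod.dist_eq]
    refine le_trans ?_ (le_max_left _ _)
    rw [Real.dist_eq]
    exact key
  have := dist_triangle (((4 * (i:ℕ) : ℝ), 0) : ℝ × ℝ) p (((4 * (j:ℕ) : ℝ), 0))
  rw [dist_comm (((4 * (i:ℕ) : ℝ), 0) : ℝ × ℝ) p] at this
  linarith

noncomputable def U (s : Finset (Fin 4)) : Set (ℝ × ℝ) := ⋃ i ∈ s, A i

lemma U_closed (s : Finset (Fin 4)) : IsClosed (U s) :=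
  Set.Finite.isClosed_biUnion s.finite_toSet (fun i _ => A_closed i)

lemma U_regular (s : Finset (Fin 4)) : U s = closure (interior (U s)) := by
  apply Set.Subset.antisymm
  · intro p hp
    rw [U, Set.mem_iUnion₂] at hp
    obtain ⟨i, hi, hpi⟩ := hp
    have h1 : p ∈ closure (interior (A i)) := (A_regular i) ▸ hpi
    refine closure_mono (interior_mono ?_) h1
    exact Set.subset_biUnion_of_mem (u := A) hi
  · exact closure_minimal interior_subset (U_closed s)

noncomputable def reg (s : Finset (Fin 4)) (hs : s.Nonempty) : Region :=
  ⟨U s, by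
    obtain ⟨i, hi⟩ := hs
    exact Set.Nonempty.mono (Set.subset_biUnion_of_mem (u := A) hi) (A_nonempty i),
    U_regular s⟩

lemma mem_U {s : Finset (Fin 4)} {p : ℝ × ℝ} :
    p ∈ U s ↔ ∃ i ∈ s, p ∈ A i := by simp [U]

lemma U_subset_iff {s t : Finset (Fin 4)} : U s ⊆ U t ↔ s ⊆ t := by
  constructor
  · intro h i hi
    have hc : ((4 * (i:ℕ) : ℝ), 0) ∈ U s :=
      mem_U.2 ⟨i, hi, Metric.mem_closedBall_self zero_le_one⟩
    obtain ⟨j, hj, hpj⟩ := mem_U.1 (h hc)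
    rcases eq_or_ne i j with rfl | hne
    · exact hj
    · exact absurd (A_disjoint hne (Metric.mem_closedBall_self zero_le_one) hpj) not_false
  · intro h p hp
    obtain ⟨i, hi, hpi⟩ := mem_U.1 hp
    exact mem_U.2 ⟨i, h hi, hpi⟩

lemma reg_subset_iff {s t : Finset (Fin 4)} (hs : s.Nonempty) (ht : t.Nonempty) :
    (reg s hs).1 ⊆ (reg t ht).1 ↔ s ⊆ t := U_subset_iff

lemma reg_eq_iff {s t : Finset (Fin 4)} (hs : s.Nonempty) (ht : t.Nonempty) :
    reg s hs = reg t ht ↔ s = t := by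
  constructor
  · intro h
    have h1 : U s ⊆ U t := by replace h := congrArg Subtype.val h; exact h.le
    have h2 : U t ⊆ U s := by replace h := congrArg Subtype.val h; exact h.ge
    exact Finset.Subset.antisymm (U_subset_iff.1 h1) (U_subset_iff.1 h2)
  · rintro rfl; rfl

lemma reg_O_iff {s t : Finset (Fin 4)} (hs : s.Nonempty) (ht : t.Nonempty) :
    Region.O (reg s hs) (reg t ht) ↔ (s ∩ t).Nonempty := by
  constructor
  · rintro ⟨w, hws, hwt⟩
    obtain ⟨p, hp⟩ := w.2.1
    obtain ⟨i, hi, hpi⟩ := mem_U.1 (hws hp)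
    obtain ⟨j, hj, hpj⟩ := mem_U.1 (hwt hp)
    rcases eq_or_ne i j with rfl | hne
    · exact ⟨i, Finset.mem_inter.2 ⟨hi, hj⟩⟩
    · exact absurd (A_disjoint hne hpi hpj) not_false
  · intro h
    refine ⟨reg (s ∩ t) h, ?_, ?_⟩
    · exact U_subset_iff.2 (Finset.inter_subset_left)
    · exact U_subset_iff.2 (Finset.inter_subset_right)

/-! ### Realizability of the table entries -/

def finrel : RCC5Basic → Finset (Fin 4) → Finset (Fin 4) → Prop
  | DR, s, t => ¬ (s ∩ t).Nonempty
  | PO, s, t => (s ∩ t).Nonempty ∧ ¬ s ⊆ t ∧ ¬ t ⊆ s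
  | PP, s, t => s ⊆ t ∧ s ≠ t
  | PPi, s, t => t ⊆ s ∧ s ≠ t
  | EQ, s, t => s = t

instance : ∀ b s t, Decidable (finrel b s t) := fun b s t => by
  cases b <;> simp only [finrel] <;> infer_instance

lemma interp_reg {b : RCC5Basic} {s t : Finset (Fin 4)} (hs : s.Nonempty) (ht : t.Nonempty)
    (h : finrel b s t) : RCC5Basic.interp b (reg s hs) (reg t ht) := by
  cases b
  · exact fun ho => h ((reg_O_iff hs ht).1 ho)
  · exact ⟨(reg_O_iff hs ht).2 h.1, fun hsub => h.2.1 ((reg_subset_iff hs ht).1 hsub),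
      fun hsub => h.2.2 ((reg_subset_iff ht hs).1 hsub)⟩
  · exact ⟨(reg_subset_iff hs ht).2 h.1, fun he => h.2 ((reg_eq_iff hs ht).1 he)⟩
  · exact ⟨(reg_subset_iff ht hs).2 h.1, fun he => h.2 ((reg_eq_iff hs ht).1 he)⟩
  · exact (reg_eq_iff hs ht).2 h

set_option maxHeartbeats 4000000 in
lemma realize_fin : ∀ b1 ∈ allB, ∀ b2 ∈ allB, ∀ γ ∈ CT b1 b2,
    ∃ s u t : Finset (Fin 4), s.Nonempty ∧ u.Nonempty ∧ t.Nonempty ∧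
      finrel b1 s u ∧ finrel b2 u t ∧ finrel γ s t := by decide

lemma realize (b1 b2 γ : RCC5Basic) (h : γ ∈ CT b1 b2) :
    ∃ x y z : Region, RCC5Basic.interp b1 x y ∧ RCC5Basic.interp b2 y z ∧
      RCC5Basic.interp γ x z := by
  obtain ⟨s, u, t, hs, hu, ht, f1, f2, f3⟩ :=
    realize_fin b1 (mem_allB b1) b2 (mem_allB b2) γ h
  exact ⟨reg s hs, reg u hu, reg t ht, interp_reg hs hu f1, interp_reg hu ht f2,
    interp_reg hs ht f3⟩

/-! ### Characterization of weak composition via the table -/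

lemma comp_eq (R S : RCC5Rel) :
    RCC5Rel.comp R S = {γ | ∃ b1 ∈ R, ∃ b2 ∈ S, γ ∈ CT b1 b2} := by
  ext γ
  constructor
  · rintro ⟨x, z, hγ, y, ⟨b1, hb1, h1⟩, ⟨b2, hb2, h2⟩⟩
    exact ⟨b1, hb1, b2, hb2, sound b1 b2 γ x y z h1 h2 hγ⟩
  · rintro ⟨b1, hb1, b2, hb2, hct⟩
    obtain ⟨x, y, z, h1, h2, h3⟩ := realize b1 b2 γ hct
    exact ⟨x, z, h3, y, ⟨b1, hb1, h1⟩, ⟨b2, hb2, h2⟩⟩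

lemma ct_assoc : ∀ b1 ∈ allB, ∀ b2 ∈ allB, ∀ b3 ∈ allB, ∀ γ ∈ allB,
    ((∃ c ∈ CT b1 b2, γ ∈ CT c b3) ↔ (∃ c ∈ CT b2 b3, γ ∈ CT b1 c)) := by decide

lemma comp_assoc (R S T : RCC5Rel) :
    RCC5Rel.comp (RCC5Rel.comp R S) T = RCC5Rel.comp R (RCC5Rel.comp S T) := by
  rw [comp_eq R S, comp_eq S T, comp_eq, comp_eq]
  ext γ
  simp only [Set.mem_setOf_eq]
  constructor
  · rintro ⟨c, ⟨b1, hb1, b2, hb2, hc⟩, b3, hb3, hγ⟩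
    obtain ⟨c', hc', hγ'⟩ := (ct_assoc b1 (mem_allB b1) b2 (mem_allB b2) b3 (mem_allB b3)
      γ (mem_allB γ)).1 ⟨c, hc, hγ⟩
    exact ⟨b1, hb1, c', ⟨b2, hb2, b3, hb3, hc'⟩, hγ'⟩
  · rintro ⟨b1, hb1, c, ⟨b2, hb2, b3, hb3, hc⟩, hγ⟩
    obtain ⟨c', hc', hγ'⟩ := (ct_assoc b1 (mem_allB b1) b2 (mem_allB b2) b3 (mem_allB b3)
      γ (mem_allB γ)).2 ⟨c, hc, hγ⟩
    exact ⟨c', ⟨b1, hb1, b2, hb2, hc'⟩, b3, hb3, hγ'⟩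

/-! ### The cycle law -/

lemma conv_conv (b : RCC5Basic) : RCC5Basic.conv (RCC5Basic.conv b) = b := by
  cases b <;> rfl

lemma interp_conv (b : RCC5Basic) (x y : Region) :
    RCC5Basic.interp (RCC5Basic.conv b) x y ↔ RCC5Basic.interp b y x := by
  cases b
  · exact ⟨fun h ho => h (O_symm ho), fun h ho => h (O_symm ho)⟩
  · exact ⟨fun ⟨a, b, c⟩ => ⟨O_symm a, c, b⟩, fun ⟨a, b, c⟩ => ⟨O_symm a, c, b⟩⟩
  · exact ⟨fun ⟨a, b⟩ => ⟨a, b.symm⟩, fun ⟨a, b⟩ => ⟨a, b.symm⟩⟩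
  · exact ⟨fun ⟨a, b⟩ => ⟨a, b.symm⟩, fun ⟨a, b⟩ => ⟨a, b.symm⟩⟩
  · exact ⟨fun h => h.symm, fun h => h.symm⟩

lemma rel_interp_conv (R : RCC5Rel) (x y : Region) :
    RCC5Rel.interp (RCC5Rel.conv R) x y ↔ RCC5Rel.interp R y x := by
  constructor
  · rintro ⟨b, hb, h⟩
    exact ⟨RCC5Basic.conv b, hb, (interp_conv b y x).2 h⟩
  · rintro ⟨b, hb, h⟩
    refine ⟨RCC5Basic.conv b, ?_, (interp_conv b x y).2 h⟩
    show RCC5Basic.conv (RCC5Basic.conv b) ∈ R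
    rw [conv_conv]; exact hb

def key (R S T : RCC5Rel) : Prop :=
  ∃ x y z : Region, RCC5Rel.interp R x y ∧ RCC5Rel.interp S y z ∧ RCC5Rel.interp T x z

lemma nonempty_iff_key (R S T : RCC5Rel) :
    (RCC5Rel.comp R S ∩ T).Nonempty ↔ key R S T := by
  constructor
  · rintro ⟨γ, ⟨x, z, hγ, y, hR, hS⟩, hT⟩
    exact ⟨x, y, z, hR, hS, γ, hT, hγ⟩
  · rintro ⟨x, y, z, hR, hS, b, hb, hbxz⟩
    exact ⟨b, ⟨x, z, hbxz, y, hR, hS⟩, hb⟩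

lemma key_cycle1 (R S T : RCC5Rel) : key R S T ↔ key (RCC5Rel.conv R) T S := by
  constructor
  · rintro ⟨x, y, z, hR, hS, hT⟩
    exact ⟨y, x, z, (rel_interp_conv R y x).2 hR, hT, hS⟩
  · rintro ⟨a, b, c, hR, hT, hS⟩
    exact ⟨b, a, c, (rel_interp_conv R a b).1 hR, hS, hT⟩

lemma key_cycle2 (R S T : RCC5Rel) : key R S T ↔ key T (RCC5Rel.conv S) R := by
  constructor
  · rintro ⟨x, y, z, hR, hS, hT⟩
    exact ⟨x, z, y, hT, (rel_interp_conv S z y).2 hS, hR⟩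
  · rintro ⟨a, b, c, hT, hS, hR⟩
    exact ⟨a, c, b, hR, (rel_interp_conv S b c).1 hS, hT⟩

lemma rel_conv_conv (R : RCC5Rel) : RCC5Rel.conv (RCC5Rel.conv R) = R := by
  ext b
  show RCC5Basic.conv (RCC5Basic.conv b) ∈ R ↔ b ∈ R
  rw [conv_conv]

end RCC5Proof

/-- Weak composition of RCC5 relations is associative and satisfies the cycle law. -/
theorem rcc5_assoc_and_cycle_law (R S T : RCC5Rel) :
    RCC5Rel.comp (RCC5Rel.comp R S) T = RCC5Rel.comp R (RCC5Rel.comp S T) ∧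
    ((RCC5Rel.comp R S ∩ T).Nonempty ↔ (RCC5Rel.comp (RCC5Rel.conv R) T ∩ S).Nonempty) ∧
    ((RCC5Rel.comp (RCC5Rel.conv R) T ∩ S).Nonempty ↔
      (RCC5Rel.comp T (RCC5Rel.conv S) ∩ R).Nonempty) := by
  refine ⟨RCC5Proof.comp_assoc R S T, ?_, ?_⟩
  · rw [RCC5Proof.nonempty_iff_key, RCC5Proof.nonempty_iff_key]
    exact RCC5Proof.key_cycle1 R S T
  · rw [RCC5Proof.nonempty_iff_key, RCC5Proof.nonempty_iff_key]
    rw [← RCC5Proof.key_cycle1 R S T, RCC5Proof.key_cycle2 R S T]
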